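/- (Unwinding Theorem of Noninterference) If a state machine M with information-flow configuration Info satisfies both the step-consistency condition SC(M, Info) and the local respect condition LR(M, Info), then M satisfies intransitive noninterference NI(M, Info): for every action list as and every domain d, every state s ∈ run(s₀, as) and every state t ∈ run(s₀, ipurge(as, d)) satisfy s ∼ᵈ t. -/

import Mathlib

/-!
Unwinding: by induction on the trace, carry the invariant that the two current states are
`v`-equivalent for every domain `v` in `sources as d`. An action kept by `ipurge` is taken by
both runs, and step consistency preserves the invariant because its own domain is a source. A
purged action is taken by the first run only; its domain cannot interfere with any remaining
source, so by local respect the step is invisible to all of them.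
-/

/-- `sources dom flow as d` : the set of domains allowed to transfer
information to domain `d` over the action trace `as`. -/
def sources {A D : Type*} (dom : A → D) (flow : D → D → Prop) :
    List A → D → Set D
  | [], d => {d}
  | a :: as, d =>
      sources dom flow as d ∪
        {w | w = dom a ∧ ∃ v, flow w v ∧ v ∈ sources dom flow as d}

open Classical in
/-- `ipurge dom flow as d` : the purged trace retaining the actions whose
domain belongs to `sources`. -/
noncomputable def ipurge {A D : Type*} (dom : A → D) (flow : D → D → Prop) :
    List A → D → List A
  | [], _ => []
  | a :: as, d =>
      if dom a ∈ sources dom flow (a :: as) d then a :: ipurge dom flow as d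
      else ipurge dom flow as d

/-- Multi-step execution. -/
def run {S A : Type*} (step : S → A → Set S) : S → List A → Set S
  | s, [] => {s}
  | s, a :: as => ⋃ s' ∈ step s a, run step s' as

/-- Local respect. -/
def LR {S A D : Type*} (step : S → A → Set S) (dom : A → D)
    (flow : D → D → Prop) (ind : D → S → S → Prop) : Prop :=
  ∀ a d s s', s' ∈ step s a → ¬ flow (dom a) d → ind d s s'

/-- Step consistency. -/
def SC {S A D : Type*} (step : S → A → Set S) (dom : A → D)
    (flow : D → D → Prop) (ind : D → S → S → Prop) : Prop :=
  ∀ a d s₁ s₂ s₁' s₂', ind d s₁ s₂ → s₁' ∈ step s₁ a → s₂' ∈ step s₂ a →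
    (flow (dom a) d → ind (dom a) s₁ s₂) → ind d s₁' s₂'

theorem mem_sources_self {A D : Type*} (dom : A → D) (flow : D → D → Prop) (as : List A)
    (d : D) : d ∈ sources dom flow as d := by
  induction as with
  | nil => exact rfl
  | cons _ _ ih => exact Or.inl ih

section Unwinding

variable {S A D : Type*} {step : S → A → Set S} {dom : A → D} {flow : D → D → Prop}
  {ind : D → S → S → Prop}

theorem mem_run_cons {s u : S} {a : A} {as : List A} :
    u ∈ run step s (a :: as) ↔ ∃ s' ∈ step s a, u ∈ run step s' as := by
  simp only [run, Set.mem_iUnion, exists_prop]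

theorem SC.ind_sources_of_step (hSC : SC step dom flow ind) {a : A} {as : List A} {d : D}
    {s t s' t' : S} (hdom : dom a ∈ sources dom flow (a :: as) d)
    (hst : ∀ v ∈ sources dom flow (a :: as) d, ind v s t) (hs' : s' ∈ step s a)
    (ht' : t' ∈ step t a) : ∀ v ∈ sources dom flow as d, ind v s' t' :=
  fun v hv => hSC a v s t s' t' (hst v (Or.inl hv)) hs' ht' fun _ => hst (dom a) hdom

theorem LR.ind_sources_of_step (hequiv : ∀ d, Equivalence (ind d))
    (hLR : LR step dom flow ind) {a : A} {as : List A} {d : D} {s t s' : S}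
    (hdom : dom a ∉ sources dom flow (a :: as) d)
    (hst : ∀ v ∈ sources dom flow (a :: as) d, ind v s t) (hs' : s' ∈ step s a) :
    ∀ v ∈ sources dom flow as d, ind v s' t := by
  intro v hv
  have hno_flow : ¬ flow (dom a) v := fun hflow => hdom (Or.inr ⟨rfl, v, hflow, hv⟩)
  exact (hequiv v).trans ((hequiv v).symm (hLR a v s s' hs' hno_flow)) (hst v (Or.inl hv))

theorem ind_of_mem_run_of_mem_run_ipurge (hequiv : ∀ d, Equivalence (ind d))
    (hSC : SC step dom flow ind) (hLR : LR step dom flow ind) (as : List A) (d : D)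
    {s t : S} (hst : ∀ v ∈ sources dom flow as d, ind v s t) {s' t' : S}
    (hs' : s' ∈ run step s as) (ht' : t' ∈ run step t (ipurge dom flow as d)) :
    ind d s' t' := by
  induction as generalizing s t with
  | nil =>
    rw [run, Set.mem_singleton_iff] at hs'
    rw [ipurge, run, Set.mem_singleton_iff] at ht'
    subst hs' ht'
    exact hst d (mem_sources_self dom flow [] d)
  | cons a as ih =>
    obtain ⟨s₁, hs₁, hs'⟩ := mem_run_cons.mp hs'
    by_cases hdom : dom a ∈ sources dom flow (a :: as) d
    · rw [ipurge, if_pos hdom] at ht'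
      obtain ⟨t₁, ht₁, ht'⟩ := mem_run_cons.mp ht'
      exact ih (hSC.ind_sources_of_step hdom hst hs₁ ht₁) hs' ht'
    · rw [ipurge, if_neg hdom] at ht'
      exact ih (hLR.ind_sources_of_step hequiv hdom hst hs₁) hs' ht'

end Unwinding

/-- Unwinding theorem of intransitive noninterference. -/
theorem stmt_5 {S A D : Type*}
    (step : S → A → Set S) (s₀ : S) (dom : A → D) (flow : D → D → Prop)
    (ind : D → S → S → Prop) (hequiv : ∀ d, Equivalence (ind d))
    (hSC : SC step dom flow ind) (hLR : LR step dom flow ind) :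
    ∀ (as : List A) (d : D),
      ∀ s ∈ run step s₀ as, ∀ t ∈ run step s₀ (ipurge dom flow as d),
        ind d s t := by
  intro as d s hs t ht
  exact ind_of_mem_run_of_mem_run_ipurge hequiv hSC hLR as d
    (fun v _ => (hequiv v).refl s₀) hs ht
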